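/- arXiv:1609.02351 — 5 statements merged into one kernel-verified Lean document; each statement's English description precedes it below -/
import Mathlib

section
/- For every even integer n with n ≥ 4, the rainbow connection number of the cycle graph C_n on n vertices equals n/2. -/
/-!
Colour the edge `{a, a + 1}` of `C_{2m}` by `a mod m`. Any `m` consecutive edges then get distinct
colours, and any two vertices are joined by an arc of at most `m` edges. Conversely, a rainbow path
has at most as many edges as there are colours, and antipodal vertices are at distance `m`.
-/

open SimpleGraph

/-- An edge coloring of `G` with `k` colors makes `G` rainbow connected if between every pair
of distinct vertices there is a path all of whose edges receive pairwise distinct colors. -/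
def IsRainbowConnected {V : Type*} (G : SimpleGraph V) {k : ℕ} (c : Sym2 V → Fin k) : Prop :=
  ∀ u v : V, u ≠ v → ∃ p : G.Walk u v, p.IsPath ∧ (p.edges.map c).Nodup

/-- The rainbow connection number `rc G`: the minimum number of colors `k` for which some
edge coloring with `k` colors makes `G` rainbow connected. -/
noncomputable def rc {V : Type*} (G : SimpleGraph V) : ℕ :=
  sInf {k | ∃ c : Sym2 V → Fin k, IsRainbowConnected G c}

open scoped Fin.CommRing Fin.NatCast

section RainbowConnection

variable {V : Type*} {G : SimpleGraph V} {k : ℕ} {c : Sym2 V → Fin k}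

lemma isRainbowConnected_of_forall_exists_walk
    (h : ∀ u v : V, ∃ p : G.Walk u v, (p.edges.map c).Nodup) : IsRainbowConnected G c := by
  classical
  intro u v _
  obtain ⟨p, hp⟩ := h u v
  exact ⟨p.bypass, p.bypass_isPath, hp.sublist (p.edges_bypass_sublist_edges.map c)⟩

lemma IsRainbowConnected.dist_le (hc : IsRainbowConnected G c) (u v : V) : G.dist u v ≤ k := by
  rcases eq_or_ne u v with rfl | huv
  · simp
  obtain ⟨p, -, hp⟩ := hc u v huv
  calc G.dist u v ≤ p.length := SimpleGraph.dist_le p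
    _ = (p.edges.map c).length := by simp
    _ ≤ k := by simpa using hp.length_le_card

lemma rc_le (hc : IsRainbowConnected G c) : rc G ≤ k :=
  Nat.sInf_le ⟨c, hc⟩

lemma dist_le_rc (hG : ∃ k, ∃ c : Sym2 V → Fin k, IsRainbowConnected G c) (u v : V) :
    G.dist u v ≤ rc G := by
  obtain ⟨c, hc⟩ := Nat.sInf_mem hG
  exact hc.dist_le u v

end RainbowConnection

namespace SimpleGraph.cycleGraph

variable {n : ℕ}

def distToZero (x : Fin n) : ℕ := min x.val (n - x.val)

lemma distToZero_le_of_adj {u v : Fin (n + 2)} (h : (cycleGraph (n + 2)).Adj u v) :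
    distToZero u ≤ distToZero v + 1 := by
  have step : ∀ a : Fin (n + 2),
      distToZero a ≤ distToZero (a + 1) + 1 ∧ distToZero (a + 1) ≤ distToZero a + 1 := by
    intro a
    have := a.isLt
    unfold distToZero
    rw [Fin.val_add_one]
    split_ifs with ha
    · rw [ha, Fin.val_last]; omega
    · omega
  rcases h with h | h
  · obtain rfl : u = v + 1 := by rw [← h]; ring
    exact (step v).2
  · obtain rfl : v = u + 1 := by rw [← h]; ring
    exact (step u).1

lemma distToZero_le_add_length {u v : Fin (n + 2)} (p : (cycleGraph (n + 2)).Walk u v) :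
    distToZero u ≤ distToZero v + p.length := by
  induction p with
  | nil => simp
  | cons h _ ih => have := distToZero_le_of_adj h; simp only [Walk.length_cons]; omega

lemma distToZero_le_dist (v : Fin (n + 2)) : distToZero v ≤ (cycleGraph (n + 2)).dist v 0 := by
  obtain ⟨p, hp⟩ := cycleGraph_connected.exists_walk_length_eq_dist v 0
  simpa [← hp, distToZero] using distToZero_le_add_length p

def walkUp : (u : Fin (n + 2)) → (d : ℕ) → (cycleGraph (n + 2)).Walk u (u + d)
  | u, 0 => Walk.nil.copy rfl (by simp)
  | u, d + 1 =>
    (Walk.cons (by rw [cycleGraph_adj]; right; ring) (walkUp (u + 1) d)).copy rfl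
      (by push_cast; ring)

lemma edges_walkUp (u : Fin (n + 2)) (d : ℕ) :
    (walkUp u d).edges = (List.range d).map fun i : ℕ => s(u + i, u + i + 1) := by
  induction d generalizing u with
  | zero => simp [walkUp]
  | succ d ih =>
    simp only [walkUp, Walk.edges_copy, Walk.edges_cons, ih, List.range_succ_eq_map, List.map_cons,
      List.map_map]
    congr 1
    · simp
    · refine List.map_congr_left fun i _ => ?_
      simp only [Function.comp_apply, Nat.cast_succ]
      congr 1 <;> ring

/-- On an edge `{a, a + 1}` of the cycle on `Fin (2 m)`, `(a + b) / 2` is `a`, and on the closing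
edge `{2 m - 1, 0}` it is `m - 1`: so `{a, a + 1}` gets colour `a mod m`, and every colour is used
on exactly two antipodal edges. -/
def antipodalColoring (m : ℕ) [NeZero m] : Sym2 (Fin n) → Fin m :=
  Sym2.lift ⟨fun a b => ((a.val + b.val) / 2 : ℕ), fun a b => by
    dsimp only; rw [Nat.add_comm]⟩

variable {m : ℕ} [NeZero m]

lemma antipodalColoring_edge (hn : n + 2 = 2 * m) (a : Fin (n + 2)) :
    antipodalColoring m s(a, a + 1) = (a.val : Fin m) := by
  simp only [antipodalColoring, Sym2.lift_mk, Fin.val_add_one]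
  split_ifs with ha
  · rw [ha, Fin.val_last]
    refine Fin.ext ?_
    simp only [Fin.val_natCast]
    rw [show (n + 1 + 0) / 2 = m - 1 by omega, show n + 1 = m - 1 + m by omega, Nat.add_mod_right,
      Nat.mod_eq_of_lt (by omega)]
  · congr 1; omega

lemma antipodalColoring_walkUp_nodup (hn : n + 2 = 2 * m) (u : Fin (n + 2)) {d : ℕ}
    (hd : d ≤ m) :
    ((walkUp u d).edges.map (antipodalColoring m)).Nodup := by
  rw [edges_walkUp, List.map_map]
  refine List.Nodup.map_on (fun i hi j hj hij => ?_) List.nodup_range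
  rw [List.mem_range] at hi hj
  simp only [Function.comp_apply, antipodalColoring_edge hn, Fin.ext_iff, Fin.val_natCast,
    Fin.val_add] at hij
  have hmn : m ∣ n + 2 := ⟨2, by omega⟩
  rw [Nat.mod_mod_of_dvd _ hmn, Nat.mod_mod_of_dvd _ hmn, Nat.mod_eq_of_lt (by omega : i < n + 2),
    Nat.mod_eq_of_lt (by omega : j < n + 2)] at hij
  have hij' : i ≡ j [MOD m] := Nat.ModEq.add_left_cancel' u.val hij
  rwa [Nat.ModEq, Nat.mod_eq_of_lt (by omega), Nat.mod_eq_of_lt (by omega)] at hij'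

lemma exists_walk_antipodalColoring_nodup (hn : n + 2 = 2 * m) (u v : Fin (n + 2)) :
    ∃ p : (cycleGraph (n + 2)).Walk u v, (p.edges.map (antipodalColoring m)).Nodup := by
  have walk_up : ∀ a b : Fin (n + 2), (b - a).val ≤ m →
      ∃ p : (cycleGraph (n + 2)).Walk a b, (p.edges.map (antipodalColoring m)).Nodup := by
    intro a b hab
    have hb : a + ((b - a).val : Fin (n + 2)) = b := by rw [Fin.cast_val_eq_self]; ring
    exact ⟨(walkUp a _).copy rfl hb, by simpa using antipodalColoring_walkUp_nodup hn a hab⟩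
  by_cases hvu : (v - u).val ≤ m
  · exact walk_up u v hvu
  · have huv : (u - v).val ≤ m := by
      rw [← neg_sub, Fin.val_neg]
      split_ifs <;> omega
    obtain ⟨p, hp⟩ := walk_up v u huv
    exact ⟨p.reverse, by simpa [List.map_reverse] using hp⟩

lemma isRainbowConnected_antipodalColoring (hn : n + 2 = 2 * m) :
    IsRainbowConnected (cycleGraph (n + 2)) (antipodalColoring m) :=
  isRainbowConnected_of_forall_exists_walk (exists_walk_antipodalColoring_nodup hn)

end SimpleGraph.cycleGraph

lemma rc_eq_zero_of_isEmpty {V : Type*} [IsEmpty V] (G : SimpleGraph V) : rc G = 0 :=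
  Nat.le_zero.mp (rc_le (c := isEmptyElim) isEmptyElim)

theorem rc_cycleGraph_even_general (n : ℕ) (heven : Even n) :
    rc (cycleGraph n) = n / 2 := by
  obtain ⟨m, rfl⟩ := heven
  rcases Nat.eq_zero_or_pos m with rfl | hm
  · exact rc_eq_zero_of_isEmpty (V := Fin 0) _
  have : NeZero m := ⟨hm.ne'⟩
  obtain ⟨k, hk⟩ : ∃ k, m + m = k + 2 := ⟨m + m - 2, by omega⟩
  rw [hk, show (k + 2) / 2 = m by omega]
  have hc := cycleGraph.isRainbowConnected_antipodalColoring (m := m) (by omega : k + 2 = 2 * m)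
  refine le_antisymm (rc_le hc) ?_
  calc m = cycleGraph.distToZero (m : Fin (k + 2)) := by
        simp only [cycleGraph.distToZero, Fin.val_natCast, Nat.mod_eq_of_lt (by omega : m < k + 2)]
        omega
    _ ≤ (cycleGraph (k + 2)).dist m 0 := cycleGraph.distToZero_le_dist _
    _ ≤ rc (cycleGraph (k + 2)) := dist_le_rc ⟨m, _, hc⟩ _ _

/-- For every even integer `n ≥ 4`, the rainbow connection number of the cycle `C n`
equals `n / 2`. -/
theorem rc_cycleGraph_even (n : ℕ) (h4 : 4 ≤ n) (heven : Even n) :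
    rc (cycleGraph n) = n / 2 :=
  rc_cycleGraph_even_general n heven
end

section
/- For every odd integer n with n ≥ 5, the rainbow connection number of the cycle graph C_n on n vertices equals (n+1)/2, i.e. the ceiling of n/2. -/
/-!
Colour the edge `{i, i + 1}` of `C (2K + 1)` by `i` for `i ≤ K` and by `i - (K + 1)` otherwise:
any `K` consecutive edges then get distinct colours, and every two vertices are joined by an arc
of at most `K` edges.

Conversely, with at most `K` colours a rainbow path has at most `K` edges, and the only walk of
length at most `K` from `u` to `u + K` is the forward arc. So every arc of `K` edges is rainbow and
uses every colour; comparing the arcs starting at `u` and `u + 1` shows that the edges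
`{u, u + 1}` and `{u + K, u + K + 1}` have the same colour. As `1 + 2K = 0`, two such shifts take
`{1, 2}` to `{0, 1}`, so these adjacent edges share a colour, contradicting the rainbow arc at `0`
once `K ≥ 2`.
-/

open SimpleGraph

open Fin.CommRing

theorem rc_eq_of_isRainbowConnected {V : Type*} {G : SimpleGraph V} {m : ℕ}
    {c : Sym2 V → Fin m} (hc : IsRainbowConnected G c)
    (hmin : ∀ k (c' : Sym2 V → Fin k), IsRainbowConnected G c' → m ≤ k) : rc G = m :=
  le_antisymm (Nat.sInf_le ⟨c, hc⟩) (le_csInf ⟨m, c, hc⟩ fun k ⟨c', hc'⟩ => hmin k c' hc')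

theorem List.eq_of_nodup_cons_of_nodup_append_singleton {α : Type*} [Fintype α] {a b : α}
    {l : List α} (ha : (a :: l).Nodup) (hb : (l ++ [b]).Nodup)
    (hcard : Fintype.card α ≤ l.length + 1) : a = b := by
  classical
  have huniv : (a :: l).toFinset = Finset.univ :=
    Finset.eq_univ_of_card _ <| le_antisymm (Finset.card_le_univ _) <| by
      rw [List.toFinset_card_of_nodup ha, List.length_cons]; exact hcard
  have hb' : b ∉ l := (List.nodup_cons.mp (List.nodup_append_comm.mp hb)).1
  have hbmem : b ∈ a :: l := by simpa using congrArg (b ∈ ·) huniv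
  exact ((List.mem_cons.mp hbmem).resolve_right hb').symm

theorem Fin.eq_of_natCast_eq {n a b : ℕ} [NeZero n] (ha : a < n) (hb : b < n)
    (h : (a : Fin n) = b) : a = b := by
  simpa [Fin.val_cast_of_lt ha, Fin.val_cast_of_lt hb] using congrArg Fin.val h

namespace SimpleGraph.cycleGraph

variable {n : ℕ} [NeZero n]

theorem adj_iff (hn : 1 < n) {u v : Fin n} :
    (cycleGraph n).Adj u v ↔ v = u + 1 ∨ u = v + 1 := by
  have hone : ∀ x : Fin n, x.val = 1 ↔ x = 1 := fun x => by
    rw [Fin.ext_iff, Fin.val_one', Nat.mod_eq_of_lt hn]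
  rw [cycleGraph_adj', hone, hone, sub_eq_iff_eq_add, sub_eq_iff_eq_add, add_comm 1, add_comm 1,
    or_comm]

theorem adj_add_one (hn : 1 < n) (u : Fin n) : (cycleGraph n).Adj u (u + 1) :=
  (adj_iff hn).mpr (Or.inl rfl)

theorem injective_sym2_mk_add_one (hn : 2 < n) :
    Function.Injective fun x : Fin n => s(x, x + 1) := by
  intro x y h
  rcases Sym2.eq_iff.mp h with ⟨hxy, -⟩ | ⟨hx, hy⟩
  · exact hxy
  · have h2 : ((2 : ℕ) : Fin n) = 0 := by push_cast; linear_combination hy - hx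
    rw [Fin.natCast_eq_zero] at h2
    exact absurd (Nat.le_of_dvd two_pos h2) (by omega)

def arcEdges (u : Fin n) (d : ℕ) : List (Sym2 (Fin n)) :=
  (List.range d).map fun i : ℕ => s(u + (i : Fin n), u + (i : Fin n) + 1)

theorem arcEdges_succ (u : Fin n) (d : ℕ) :
    arcEdges u (d + 1) = s(u, u + 1) :: arcEdges (u + 1) d := by
  simp only [arcEdges, List.range_succ_eq_map, List.map_cons, List.map_map, Nat.cast_zero,
    add_zero, zero_add, Function.comp_def, Nat.cast_succ, add_assoc, add_comm (1 : Fin n)]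

theorem arcEdges_succ' (u : Fin n) (d : ℕ) :
    arcEdges u (d + 1) = arcEdges u d ++ [s(u + d, u + d + 1)] := by
  simp [arcEdges, List.range_succ]

def arc (hn : 1 < n) (u : Fin n) : (d : ℕ) → (cycleGraph n).Walk u (u + d)
  | 0 => Walk.nil.copy rfl (by simp)
  | d + 1 => ((arc hn u d).concat (adj_add_one hn _)).copy rfl (by push_cast; ring)

theorem edges_arc (hn : 1 < n) (u : Fin n) (d : ℕ) : (arc hn u d).edges = arcEdges u d := by
  induction d with
  | zero => simp [arc, arcEdges]
  | succ d ih => simp [arc, arcEdges_succ', Walk.edges_concat, ih]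

theorem support_arc (hn : 1 < n) (u : Fin n) (d : ℕ) :
    (arc hn u d).support = (List.range (d + 1)).map fun i : ℕ => u + (i : Fin n) := by
  induction d with
  | zero => simp [arc]
  | succ d ih => simp [arc, Walk.support_concat, ih, List.range_succ, add_assoc]

theorem isPath_arc (hn : 1 < n) (u : Fin n) {d : ℕ} (hd : d < n) : (arc hn u d).IsPath := by
  refine Walk.IsPath.mk' ?_
  rw [support_arc]
  refine List.nodup_range.map_on fun i hi j hj h => ?_
  rw [List.mem_range] at hi hj
  exact Fin.eq_of_natCast_eq (by omega) (by omega) (add_left_cancel h)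

theorem exists_add_eq_add_of_walk (hn : 1 < n) {u v : Fin n} (p : (cycleGraph n).Walk u v) :
    ∃ a b : ℕ, a + b = p.length ∧ u + a = v + b := by
  induction p with
  | nil => exact ⟨0, 0, rfl, rfl⟩
  | @cons u w v h q ih =>
    obtain ⟨a, b, hab, hq⟩ := ih
    rcases (adj_iff hn).mp h with rfl | rfl
    · exact ⟨a + 1, b, by rw [Walk.length_cons]; omega, by push_cast; linear_combination hq⟩
    · exact ⟨a, b + 1, by rw [Walk.length_cons]; omega, by push_cast; linear_combination hq⟩

theorem edges_eq_arcEdges_of_length_le {ℓ : ℕ} (hℓ : 2 * ℓ < n) {u v : Fin n}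
    (p : (cycleGraph n).Walk u v) (hv : v = u + ℓ) (hp : p.length ≤ ℓ) : p.edges = arcEdges u ℓ := by
  induction p generalizing ℓ with
  | nil =>
    have h0 : (ℓ : Fin n) = 0 := by linear_combination -hv
    obtain rfl : ℓ = 0 := Nat.eq_zero_of_dvd_of_lt (Fin.natCast_eq_zero.mp h0) (by omega)
    rfl
  | @cons u w v h q ih =>
    rw [Walk.length_cons] at hp
    obtain ⟨m, rfl⟩ : ∃ m, ℓ = m + 1 := ⟨ℓ - 1, by omega⟩
    have hn : 1 < n := by omega
    rcases (adj_iff hn).mp h with rfl | rfl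
    · rw [Walk.edges_cons, arcEdges_succ,
        ih (ℓ := m) (by omega) (by push_cast at hv; linear_combination hv) (by omega)]
    -- after a first step back, `v` lies `ℓ + 1` steps ahead of `w`, out of reach of `q`
    · obtain ⟨a, b, hab, hq⟩ := exists_add_eq_add_of_walk hn q
      have : a = m + 2 + b := Fin.eq_of_natCast_eq (n := n) (by omega) (by omega) <| by
        push_cast at hv ⊢; linear_combination hq + hv
      omega

section Rainbow

variable {k ℓ : ℕ} {c : Sym2 (Fin n) → Fin k}

theorem nodup_map_arcEdges_of_isRainbowConnected (hℓ : 2 * ℓ < n) (hk : k ≤ ℓ)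
    (hc : IsRainbowConnected (cycleGraph n) c) (u : Fin n) : ((arcEdges u ℓ).map c).Nodup := by
  rcases ℓ.eq_zero_or_pos with rfl | hℓ0
  · simp [arcEdges]
  have hne : u ≠ u + ℓ := fun h =>
    hℓ0.ne' <| Nat.eq_zero_of_dvd_of_lt (Fin.natCast_eq_zero.mp (by linear_combination -h))
      (by omega)
  obtain ⟨p, -, hp⟩ := hc u _ hne
  have hlen : p.length ≤ ℓ := by
    simpa using hp.length_le_card.trans_eq (Fintype.card_fin k) |>.trans hk
  rwa [← edges_eq_arcEdges_of_length_le hℓ p rfl hlen]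

theorem color_eq_color_add_of_isRainbowConnected (hℓ : 2 * ℓ < n) (hk : k ≤ ℓ) (hℓ0 : 0 < ℓ)
    (hc : IsRainbowConnected (cycleGraph n) c) (u : Fin n) :
    c s(u, u + 1) = c s(u + ℓ, u + ℓ + 1) := by
  obtain ⟨m, rfl⟩ : ∃ m, ℓ = m + 1 := ⟨ℓ - 1, by omega⟩
  have h₁ := nodup_map_arcEdges_of_isRainbowConnected hℓ hk hc u
  have h₂ := nodup_map_arcEdges_of_isRainbowConnected hℓ hk hc (u + 1)
  rw [arcEdges_succ, List.map_cons] at h₁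
  rw [arcEdges_succ', List.map_append, List.map_singleton,
    show u + 1 + (m : Fin n) = u + (m + 1 : ℕ) by push_cast; ring] at h₂
  exact List.eq_of_nodup_cons_of_nodup_append_singleton h₁ h₂ (by simpa [arcEdges])

end Rainbow

theorem not_isRainbowConnected_of_le {k K : ℕ} (hK : 2 ≤ K) (c : Sym2 (Fin (2 * K + 1)) → Fin k)
    (hk : k ≤ K) : ¬IsRainbowConnected (cycleGraph (2 * K + 1)) c := by
  intro hc
  have hperiod := color_eq_color_add_of_isRainbowConnected (by omega) hk (by omega) hc
  have hwrap : (1 : Fin (2 * K + 1)) + K + K = 0 := by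
    simpa [two_mul, add_comm, add_left_comm, add_assoc] using Fin.natCast_self (2 * K + 1)
  have hconst : c s(0, 1) = c s(1, 1 + 1) :=
    calc c s(0, 1) = c s(1 + K + K, 1 + K + K + 1) := by rw [hwrap, zero_add]
      _ = c s(1, 1 + 1) := ((hperiod 1).trans (hperiod _)).symm
  obtain ⟨m, rfl⟩ : ∃ m, K = m + 2 := ⟨K - 2, by omega⟩
  have harc := nodup_map_arcEdges_of_isRainbowConnected (by omega) hk hc 0
  rw [arcEdges_succ, arcEdges_succ] at harc
  simp only [zero_add, List.map_cons, List.nodup_cons, List.mem_cons] at harc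
  exact harc.1 (Or.inl hconst)

def oddCycleColor (K : ℕ) (x : Fin (2 * K + 1)) : Fin (K + 1) :=
  ⟨if x.val ≤ K then x.val else x.val - (K + 1), by split_ifs <;> omega⟩

noncomputable def oddCycleColoring (K : ℕ) : Sym2 (Fin (2 * K + 1)) → Fin (K + 1) :=
  Function.extend (fun x => s(x, x + 1)) (oddCycleColor K) fun _ => 0

theorem oddCycleColor_add_ne {K i j : ℕ} (u : Fin (2 * K + 1)) (hij : i < j) (hj : j < K) :
    oddCycleColor K (u + i) ≠ oddCycleColor K (u + j) := by
  simp only [oddCycleColor, ne_eq, Fin.mk.injEq, Fin.val_add_eq_ite,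
    Fin.val_cast_of_lt (show i < 2 * K + 1 by omega),
    Fin.val_cast_of_lt (show j < 2 * K + 1 by omega)]
  split_ifs <;> omega

theorem nodup_map_arcEdges_oddCycleColoring {K d : ℕ} (hd : d ≤ K) (u : Fin (2 * K + 1)) :
    ((arcEdges u d).map (oddCycleColoring K)).Nodup := by
  rw [arcEdges, List.map_map]
  refine List.nodup_range.map_on fun i hi j hj h => ?_
  rw [List.mem_range] at hi hj
  simp only [Function.comp_apply, oddCycleColoring,
    (injective_sym2_mk_add_one (by omega : 2 < 2 * K + 1)).extend_apply] at h
  by_contra hne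
  rcases Nat.lt_or_gt_of_ne hne with hij | hji
  · exact oddCycleColor_add_ne u hij (by omega) h
  · exact oddCycleColor_add_ne u hji (by omega) h.symm

theorem isRainbowConnected_oddCycleColoring (K : ℕ) :
    IsRainbowConnected (cycleGraph (2 * K + 1)) (oddCycleColoring K) := by
  intro u v huv
  have hn : 1 < 2 * K + 1 := by
    by_contra! hn
    exact huv (Fin.ext (by have := u.isLt; have := v.isLt; omega))
  have rainbow_arc : ∀ x y : Fin (2 * K + 1), (y - x).val ≤ K →
      ∃ p : (cycleGraph (2 * K + 1)).Walk x y,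
        p.IsPath ∧ (p.edges.map (oddCycleColoring K)).Nodup :=
    fun x y hxy => ⟨(arc hn x (y - x).val).copy rfl (by simp),
      by simpa using isPath_arc hn x (by omega),
      by simpa [edges_arc] using nodup_map_arcEdges_oddCycleColoring hxy x⟩
  rcases le_or_gt (v - u).val K with h | h
  · exact rainbow_arc u v h
  · have hsum := Fin.val_add_eq_ite (u - v) (v - u)
    rw [sub_add_sub_cancel, sub_self, Fin.val_zero] at hsum
    obtain ⟨p, hp, hnd⟩ := rainbow_arc v u (by have := (u - v).isLt; split_ifs at hsum <;> omega)
    exact ⟨p.reverse, hp.reverse, by simpa [List.nodup_reverse] using hnd⟩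

end SimpleGraph.cycleGraph

/-- For every odd integer `n ≥ 5`, the rainbow connection number of the cycle `C n`
equals `(n + 1) / 2 = ⌈n / 2⌉`. -/
theorem rc_cycleGraph_odd (n : ℕ) (h5 : 5 ≤ n) (hodd : Odd n) :
    rc (cycleGraph n) = (n + 1) / 2 := by
  obtain ⟨K, rfl⟩ := hodd
  rw [show (2 * K + 1 + 1) / 2 = K + 1 by omega]
  refine rc_eq_of_isRainbowConnected (cycleGraph.isRainbowConnected_oddCycleColoring K)
    fun k c hc => ?_
  by_contra! hk
  exact cycleGraph.not_isRainbowConnected_of_le (by omega) c (by omega) hc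
end

section
/- For every integer n with 3 ≤ n ≤ 6, the rainbow connection number of the fan graph F_n equals 2. -/
open SimpleGraph

/-- The fan graph `F n = P n ∨ K 1`: a path on `n` vertices (the `some` vertices, with
`some i` adjacent to `some j` iff they are consecutive on the path) together with one
additional hub vertex `none` adjacent to every path vertex. -/
def fanGraph (n : ℕ) : SimpleGraph (Option (Fin n)) :=
  SimpleGraph.fromRel (fun u v =>
    u = none ∨ ∃ i j : Fin n, u = some i ∧ v = some j ∧ (pathGraph n).Adj i j)

instance (n : ℕ) : DecidableRel (pathGraph n).Adj := fun _ _ =>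
  decidable_of_iff _ pathGraph_adj.symm

instance (n : ℕ) : DecidableRel (fanGraph n).Adj := fun u v =>
  decidable_of_iff _ (SimpleGraph.fromRel_adj _ u v).symm

/-- The explicit 2-coloring of the fan graph. -/
def fanC (n : ℕ) : Sym2 (Option (Fin n)) → Fin 2 :=
  Sym2.lift ⟨fun u v =>
    match u, v with
    | none, none => 0
    | none, some j => if j.val ≤ 2 then 0 else 1
    | some i, none => if i.val ≤ 2 then 0 else 1
    | some i, some j => if min i.val j.val % 2 = 0 then 0 else 1,
    by
      intro u v
      match u, v with
      | none, none => rfl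
      | none, some j => rfl
      | some i, none => rfl
      | some i, some j => simp [min_comm]⟩

lemma rainbow_of_two {V : Type*} (G : SimpleGraph V) (c : Sym2 V → Fin 2)
    (h : ∀ u v : V, u ≠ v → (G.Adj u v ∨
      ∃ w, G.Adj u w ∧ G.Adj w v ∧ c s(u, w) ≠ c s(w, v))) :
    IsRainbowConnected G c := by
  intro u v huv
  rcases h u v huv with hadj | ⟨w, h1, h2, hc⟩
  · exact ⟨Walk.cons hadj Walk.nil, by simp [huv], by simp⟩
  · refine ⟨Walk.cons h1 (Walk.cons h2 Walk.nil), ?_, ?_⟩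
    · simp [Walk.isPath_def, h1.ne, h2.ne, huv]
    · simp [hc]

/-- For every integer `n` with `3 ≤ n ≤ 6`, the fan graph `F n` has rainbow connection
number `2`. -/
theorem rc_fanGraph_small (n : ℕ) (h3 : 3 ≤ n) (h6 : n ≤ 6) :
    rc (fanGraph n) = 2 := by
  have hmem : 2 ∈ {k | ∃ c : Sym2 (Option (Fin n)) → Fin k, IsRainbowConnected (fanGraph n) c} := by
    refine ⟨fanC n, rainbow_of_two _ _ ?_⟩
    interval_cases n <;> decide
  refine le_antisymm (Nat.sInf_le hmem) (le_csInf ⟨2, hmem⟩ ?_)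
  rintro k ⟨c, hc⟩
  by_contra hk
  interval_cases k
  · exact (c s(none, none)).elim0
  · -- one color is not enough: `some 0` and `some 2` are non-adjacent
    have h0 : (0 : ℕ) < n := by omega
    have h2 : (2 : ℕ) < n := by omega
    obtain ⟨p, hp, hnd⟩ := hc (some ⟨0, h0⟩) (some ⟨2, h2⟩) (by simp [Fin.ext_iff])
    have hlen : p.length ≤ 1 := by
      by_contra hlen
      push_neg at hlen
      match p, hlen with
      | Walk.cons h₁ (Walk.cons h₂ q), _ =>
        simp only [Walk.edges_cons, List.map_cons, List.nodup_cons, List.mem_cons] at hnd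
        exact hnd.1 (Or.inl (Subsingleton.elim _ _))
    have hne : p.length ≠ 0 := fun h =>
      (by simp [Fin.ext_iff] : (some ⟨0, h0⟩ : Option (Fin n)) ≠ some ⟨2, h2⟩)
        (SimpleGraph.Walk.eq_of_length_eq_zero h)
    have h₁ := SimpleGraph.Walk.adj_of_length_eq_one (p := p) (by omega)
    simp only [fanGraph, SimpleGraph.fromRel_adj, pathGraph_adj, Option.some.injEq] at h₁
    rcases h₁.2 with (h | ⟨i, j, hi, hj, hij⟩) | (h | ⟨i, j, hi, hj, hij⟩) <;>
      first
        | simp at h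
        | (rw [← hi, ← hj] at hij; simp at hij)
end

section
/- For every integer n ≥ 7, the rainbow connection number of the fan graph F_n equals 3. -/
open SimpleGraph

lemma fan_adj_none_some {n : ℕ} (i : Fin n) : (fanGraph n).Adj none (some i) := by
  rw [fanGraph, fromRel_adj]
  exact ⟨by simp, Or.inl (Or.inl rfl)⟩

lemma fan_adj_some_some_iff {n : ℕ} (i j : Fin n) :
    (fanGraph n).Adj (some i) (some j) ↔ (i.val + 1 = j.val ∨ j.val + 1 = i.val) := by
  rw [fanGraph, fromRel_adj]
  constructor
  · rintro ⟨hne, h | h⟩ <;>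
    · rcases h with h | ⟨a, b, ha, hb, hab⟩
      · simp at h
      · simp only [Option.some.injEq] at ha hb
        subst ha; subst hb
        rw [pathGraph_adj] at hab
        omega
  · intro h
    refine ⟨by simp; omega, Or.inl (Or.inr ⟨i, j, rfl, rfl, ?_⟩)⟩
    rw [pathGraph_adj]; exact h

/-- The value part of the fan coloring. -/
def fanColorVal {n : ℕ} : Option (Fin n) → Option (Fin n) → ℕ
  | none, none => 0
  | none, some i => i.val
  | some i, none => i.val
  | some i, some j => min i.val j.val + 2

lemma fanColorVal_symm {n : ℕ} (u v : Option (Fin n)) : fanColorVal u v = fanColorVal v u := by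
  cases u <;> cases v <;> simp [fanColorVal, Nat.min_comm]

noncomputable def fanColor (n : ℕ) : Sym2 (Option (Fin n)) → Fin 3 :=
  Sym2.lift ⟨fun u v => ⟨fanColorVal u v % 3, Nat.mod_lt _ (by norm_num)⟩,
    fun u v => by simp [fanColorVal_symm u v]⟩

lemma fanColor_mk {n : ℕ} (u v : Option (Fin n)) :
    fanColor n s(u, v) = ⟨fanColorVal u v % 3, Nat.mod_lt _ (by norm_num)⟩ :=
  Sym2.lift_mk _ _ _

lemma fan_rainbow {n : ℕ} (h7 : 7 ≤ n) : IsRainbowConnected (fanGraph n) (fanColor n) := by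
  have haux : ∀ i j : Fin n, i.val < j.val →
      ∃ p : (fanGraph n).Walk (some i) (some j), p.IsPath ∧ (p.edges.map (fanColor n)).Nodup := by
    intro i j hij
    by_cases hadj : i.val + 1 = j.val
    · -- single edge
      refine ⟨Walk.cons ((fan_adj_some_some_iff i j).2 (Or.inl hadj)) Walk.nil, ?_, ?_⟩
      · simp [Walk.isPath_def]
        omega
      · simp
    by_cases hmod : i.val % 3 = j.val % 3
    · -- length-3 path through none and some (j-1)
      have hj3 : i.val + 3 ≤ j.val := by omega
      set j' : Fin n := ⟨j.val - 1, by omega⟩ with hj'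
      refine ⟨Walk.cons ((fan_adj_none_some i).symm)
        (Walk.cons (fan_adj_none_some j')
          (Walk.cons ((fan_adj_some_some_iff j' j).2 (Or.inl (by simp [hj']; omega))) Walk.nil)),
        ?_, ?_⟩
      · simp [Walk.isPath_def, hj', Fin.ext_iff]
        omega
      · simp only [Walk.edges_cons, Walk.edges_nil, List.map_cons, List.map_nil,
          fanColor_mk, List.nodup_cons, List.mem_cons, List.mem_singleton, List.nodup_nil,
          List.not_mem_nil, or_false, and_true, not_or]
        simp [fanColorVal, Fin.ext_iff, hj']
        omega
    · -- length-2 path through none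
      refine ⟨Walk.cons ((fan_adj_none_some i).symm)
        (Walk.cons (fan_adj_none_some j) Walk.nil), ?_, ?_⟩
      · simp [Walk.isPath_def, Fin.ext_iff]
        omega
      · simp only [Walk.edges_cons, Walk.edges_nil, List.map_cons, List.map_nil,
          fanColor_mk, List.nodup_cons, List.mem_singleton, List.nodup_nil,
          List.not_mem_nil, and_true, not_false_iff]
        simp [fanColorVal, Fin.ext_iff]
        omega
  intro u v huv
  match u, v with
  | none, none => exact absurd rfl huv
  | none, some i =>
    exact ⟨Walk.cons (fan_adj_none_some i) Walk.nil, by simp [Walk.isPath_def], by simp⟩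
  | some i, none =>
    exact ⟨Walk.cons (fan_adj_none_some i).symm Walk.nil, by simp [Walk.isPath_def], by simp⟩
  | some i, some j =>
    rcases lt_trichotomy i.val j.val with h | h | h
    · exact haux i j h
    · exact absurd (by exact congrArg some (Fin.ext h)) huv
    · obtain ⟨p, hp, hnd⟩ := haux j i h
      refine ⟨p.reverse, hp.reverse, ?_⟩
      rw [Walk.edges_reverse, List.map_reverse, List.nodup_reverse]
      exact hnd

lemma fan_lower {n k : ℕ} (h7 : 7 ≤ n) (hk : k ≤ 2)
    (c : Sym2 (Option (Fin n)) → Fin k) (hc : IsRainbowConnected (fanGraph n) c) : False := by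
  -- helper: no rainbow path between spokes with equal colors that are far apart
  have key : ∀ i j : Fin n, i.val + 3 ≤ j.val →
      c s(none, some i) = c s(none, some j) → False := by
    intro i j hij hcc
    obtain ⟨p, hp, hnd⟩ := hc (some i) (some j) (by simp [Fin.ext_iff]; omega)
    have hlen : p.length ≤ 2 := by
      have := hnd.length_le_card
      simp [Walk.length_edges] at this
      omega
    cases p with
    | nil => simp at hij
    | cons h q =>
      rename_i w
      cases q with
      | nil =>
        rw [fan_adj_some_some_iff] at h
        omega
      | cons h' q' =>
        cases q' with
        | nil =>
          cases w with
          | none =>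
            simp only [Walk.edges_cons, Walk.edges_nil, List.map_cons, List.map_nil,
              List.nodup_cons, List.mem_singleton, List.not_mem_nil, not_false_iff,
              List.nodup_nil, and_true] at hnd
            apply hnd
            rw [show s(some i, none) = s(none, some i) from Sym2.eq_swap]
            exact hcc
          | some m =>
            rw [fan_adj_some_some_iff] at h h'
            omega
        | cons h'' q'' =>
          simp [Walk.length_cons] at hlen
  -- pigeonhole among spokes 0, 3, 6
  have hcard : Fintype.card (Fin k) ≤ 2 := by simpa using hk
  set i0 : Fin n := ⟨0, by omega⟩
  set i3 : Fin n := ⟨3, by omega⟩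
  set i6 : Fin n := ⟨6, by omega⟩
  by_cases h03 : c s(none, some i0) = c s(none, some i3)
  · exact key i0 i3 (by simp [i0, i3]) h03
  by_cases h06 : c s(none, some i0) = c s(none, some i6)
  · exact key i0 i6 (by simp [i0, i6]) h06
  by_cases h36 : c s(none, some i3) = c s(none, some i6)
  · exact key i3 i6 (by simp [i3, i6]) h36
  have : ([c s(none, some i0), c s(none, some i3), c s(none, some i6)] : List (Fin k)).Nodup := by
    simp [List.nodup_cons]
    exact ⟨⟨h03, h06⟩, h36⟩
  have := this.length_le_card
  simp at this
  omega

/-- For every integer `n ≥ 7`, the fan graph `F n` has rainbow connection number `3`. -/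
theorem rc_fanGraph_large (n : ℕ) (h7 : 7 ≤ n) :
    rc (fanGraph n) = 3 := by
  have h3 : 3 ∈ {k | ∃ c : Sym2 (Option (Fin n)) → Fin k, IsRainbowConnected (fanGraph n) c} :=
    ⟨fanColor n, fan_rainbow h7⟩
  apply le_antisymm
  · exact Nat.sInf_le h3
  · apply le_csInf ⟨3, h3⟩
    intro k hk
    obtain ⟨c, hc⟩ := hk
    by_contra hlt
    exact fan_lower h7 (by omega) c hc
end

section
/- Let G be a graph obtained from a 6-cycle C_6 by adding k new vertices (1 ≤ k ≤ 3), each new vertex being adjacent to exactly the two endpoints of one edge of the cycle, with the chosen edges pairwise distinct. If G has diameter 3, then the rainbow connection number of G equals 3. -/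
open SimpleGraph

/-- The graph obtained from the 6-cycle `C 6` (the `Sum.inl` vertices) by adding `k` new
vertices (the `Sum.inr` vertices), where the new vertex `j` is adjacent to exactly the two
endpoints `f j` and `f j + 1` of the cycle edge `{f j, f j + 1}` chosen for it. -/
def sixCyclePlusEars (k : ℕ) (f : Fin k → Fin 6) : SimpleGraph (Fin 6 ⊕ Fin k) :=
  SimpleGraph.fromRel (fun x y =>
    (∃ u v : Fin 6, x = Sum.inl u ∧ y = Sum.inl v ∧ (cycleGraph 6).Adj u v) ∨
    (∃ (u : Fin 6) (j : Fin k), x = Sum.inl u ∧ y = Sum.inr j ∧ (u = f j ∨ u = f j + 1)))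

/-!
Colour the cycle edge `{i, i + 1}` with `i mod 3` and both edges of an ear with the colour of the
cycle edge it spans. Any three consecutive cycle edges then get distinct colours, and every pair
of vertices is joined by a path of at most three edges running along consecutive cycle edges,
where an ear may stand in for the edge it spans; the only exception would be two ears on
opposite edges, which are at distance `4` and so are excluded by the diameter hypothesis. Hence
`rc ≤ 3`, while `rc ≥ diam = 3` because a rainbow path has at most as many edges as there are
colours.
-/

namespace SimpleGraph

variable {V : Type*} {G : SimpleGraph V} {k : ℕ} {c : Sym2 V → Fin k} {u v w x : V}

def RainbowPath (G : SimpleGraph V) (c : Sym2 V → Fin k) (u v : V) : Prop :=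
  ∃ p : G.Walk u v, p.IsPath ∧ (p.edges.map c).Nodup

namespace RainbowPath

theorem symm (h : G.RainbowPath c u v) : G.RainbowPath c v u := by
  obtain ⟨p, hp, hc⟩ := h
  exact ⟨p.reverse, hp.reverse, by simpa [List.nodup_reverse] using hc⟩

theorem of_adj (h : G.Adj u v) : G.RainbowPath c u v :=
  ⟨h.toWalk, by simp [h.ne], by simp⟩

theorem of_adj_adj (huv : u ≠ v) (huw : G.Adj u w) (hwv : G.Adj w v)
    (hc : c s(u, w) ≠ c s(w, v)) : G.RainbowPath c u v :=
  ⟨.cons huw (.cons hwv .nil), by simp [huw.ne, hwv.ne, huv], by simpa using hc⟩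

theorem of_adj_adj_adj (huv : u ≠ v) (hux : u ≠ x) (hwv : w ≠ v)
    (huw : G.Adj u w) (hwx : G.Adj w x) (hxv : G.Adj x v)
    (hc : [c s(u, w), c s(w, x), c s(x, v)].Nodup) : G.RainbowPath c u v :=
  ⟨.cons huw (.cons hwx (.cons hxv .nil)), by simp [huw.ne, hwx.ne, hxv.ne, huv, hux, hwv],
    by simpa using hc⟩

theorem edist_le (h : G.RainbowPath c u v) : G.edist u v ≤ k := by
  obtain ⟨p, -, hc⟩ := h
  calc G.edist u v ≤ p.length := SimpleGraph.edist_le p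
    _ = (p.edges.map c).length := by simp
    _ ≤ k := by exact_mod_cast hc.length_le_card.trans (Fintype.card_fin k).le

end RainbowPath

end SimpleGraph

namespace IsRainbowConnected

variable {V : Type*} {G : SimpleGraph V} {k : ℕ} {c : Sym2 V → Fin k}

theorem diam_le (hc : IsRainbowConnected G c) : G.diam ≤ k := by
  have hediam : G.ediam ≤ k := ediam_le_of_edist_le fun u v => by
    obtain rfl | huv := eq_or_ne u v
    · simp
    · exact RainbowPath.edist_le (hc u v huv)
  exact ENat.toNat_le_of_le_natCast hediam

theorem rc_le (hc : IsRainbowConnected G c) : rc G ≤ k :=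
  Nat.sInf_le ⟨c, hc⟩

theorem diam_le_rc (hc : IsRainbowConnected G c) : G.diam ≤ rc G := by
  obtain ⟨c', hc'⟩ : rc G ∈ {k | ∃ c : Sym2 V → Fin k, IsRainbowConnected G c} :=
    Nat.sInf_mem ⟨k, c, hc⟩
  exact hc'.diam_le

end IsRainbowConnected

namespace SixCyclePlusEars

open Sum

variable {k : ℕ} {f : Fin k → Fin 6}

@[simp]
theorem adj_inl_inl {u v : Fin 6} :
    (sixCyclePlusEars k f).Adj (inl u) (inl v) ↔ (cycleGraph 6).Adj u v := by
  simpa [sixCyclePlusEars, (cycleGraph 6).adj_comm u v] using fun h => (ne_of_adj _ h).symm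

@[simp]
theorem adj_inl_inr {u : Fin 6} {j : Fin k} :
    (sixCyclePlusEars k f).Adj (inl u) (inr j) ↔ u = f j ∨ u = f j + 1 := by
  simp [sixCyclePlusEars]

@[simp]
theorem adj_inr_inl {u : Fin 6} {j : Fin k} :
    (sixCyclePlusEars k f).Adj (inr j) (inl u) ↔ u = f j ∨ u = f j + 1 := by
  rw [SimpleGraph.adj_comm, adj_inl_inr]

@[simp]
theorem not_adj_inr_inr {i j : Fin k} : ¬ (sixCyclePlusEars k f).Adj (inr i) (inr j) := by
  simp [sixCyclePlusEars]

theorem four_le_edist_inr_inr {j j' : Fin k} (h : f j' = f j + 3) :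
    4 ≤ (sixCyclePlusEars k f).edist (inr j) (inr j') := by
  have hfar : ∀ a u v : Fin 6, (u = a ∨ u = a + 1) → (v = a + 3 ∨ v = a + 3 + 1) →
      u ≠ v ∧ ¬ (cycleGraph 6).Adj u v := by decide
  by_contra! hlt
  obtain ⟨p, hp⟩ := (edist_ne_top_iff_reachable.mp hlt.ne_top).exists_walk_length_eq_edist
  have hlen : p.length < 4 := by rw [← hp] at hlt; exact_mod_cast hlt
  rcases p with _ | ⟨h1, _ | ⟨h2, _ | ⟨h3, _ | ⟨h4, p⟩⟩⟩⟩
  · exact absurd h (by generalize f j = a; revert a; decide)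
  · exact not_adj_inr_inr h1
  · rename_i w
    rcases w with u | i
    · rw [adj_inr_inl] at h1
      rw [adj_inl_inr, h] at h2
      exact (hfar _ _ _ h1 h2).1 rfl
    · exact not_adj_inr_inr h1
  · rename_i w x
    rcases w with u | i
    · rcases x with v | i
      · rw [adj_inr_inl] at h1
        rw [adj_inl_inr, h] at h3
        exact (hfar _ _ _ h1 h3).2 (adj_inl_inl.mp h2)
      · exact not_adj_inr_inr h3
    · exact not_adj_inr_inr h1
  · simp only [Walk.length_cons] at hlen
    omega

theorem ne_add_three_of_diam_eq_three (hdiam : (sixCyclePlusEars k f).diam = 3)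
    (j j' : Fin k) : f j' ≠ f j + 3 := by
  intro h
  have hfin : (sixCyclePlusEars k f).ediam ≠ ⊤ := ediam_ne_top_of_diam_ne_zero (by omega)
  have hle : (sixCyclePlusEars k f).edist (inr j) (inr j') ≤ 3 :=
    calc _ ≤ (sixCyclePlusEars k f).ediam := edist_le_ediam
      _ = 3 := by rw [← ENat.natCast_toNat hfin, ← diam, hdiam]; rfl
  exact absurd (four_le_edist_inr_inr h) (not_le.mpr (hle.trans_lt (by norm_num)))

/-- Cycle vertex `i` sits at `2 i` and ear `j` at `2 f j + 1`, the midpoint of its edge, on a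
12-cycle. -/
def doubledPos (f : Fin k → Fin 6) : Fin 6 ⊕ Fin k → Fin 12
  | inl i => 2 * Fin.castLE (by norm_num) i
  | inr j => 2 * Fin.castLE (by norm_num) (f j) + 1

/-- The endpoint positions of an edge running along the cycle edge `{i, i + 1}` add up to
`4 i + 1`, `4 i + 2` or `4 i + 3` modulo `12`, so this is `i mod 3`. -/
def edgeColor (p q : Fin 12) : Fin 3 := ⟨(p + q).val / 4, by omega⟩

def earColoring (f : Fin k → Fin 6) : Sym2 (Fin 6 ⊕ Fin k) → Fin 3 :=
  Sym2.lift ⟨fun x y => edgeColor (doubledPos f x) (doubledPos f y),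
    fun x y => by simp only [edgeColor, add_comm]⟩

@[simp]
theorem earColoring_mk (x y : Fin 6 ⊕ Fin k) :
    earColoring f s(x, y) = edgeColor (doubledPos f x) (doubledPos f y) := rfl

theorem rainbowPath_inl_inl {u v : Fin 6} (huv : u ≠ v) :
    (sixCyclePlusEars k f).RainbowPath (earColoring f) (inl u) (inl v) := by
  have hv : v = u + 1 ∨ v = u + 2 ∨ v = u + 3 ∨ v = u + 4 ∨ v = u + 5 := by
    revert u v; decide
  rcases hv with rfl | rfl | rfl | rfl | rfl <;>
    [refine .of_adj ?_;
     refine .of_adj_adj (w := inl (u + 1)) ?_ ?_ ?_ ?_;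
     refine .of_adj_adj_adj (w := inl (u + 1)) (x := inl (u + 2)) ?_ ?_ ?_ ?_ ?_ ?_ ?_;
     refine .of_adj_adj (w := inl (u + 5)) ?_ ?_ ?_ ?_;
     refine .of_adj ?_]
  all_goals
    simp only [ne_eq, inl.injEq, adj_inl_inl, cycleGraph_adj, earColoring_mk, doubledPos]
    revert u; decide

theorem rainbowPath_inl_inr (u : Fin 6) (j : Fin k) :
    (sixCyclePlusEars k f).RainbowPath (earColoring f) (inl u) (inr j) := by
  have hu : u = f j ∨ u = f j + 1 ∨ u = f j + 2 ∨ u = f j + 3 ∨ u = f j + 4 ∨ u = f j + 5 := by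
    generalize f j = a; revert u a; decide
  rcases hu with rfl | rfl | rfl | rfl | rfl | rfl <;>
    [refine .of_adj ?_;
     refine .of_adj ?_;
     refine (RainbowPath.of_adj_adj (w := inl (f j + 1)) ?_ ?_ ?_ ?_).symm;
     refine (RainbowPath.of_adj_adj_adj (w := inl (f j + 1)) (x := inl (f j + 2))
       ?_ ?_ ?_ ?_ ?_ ?_ ?_).symm;
     refine .of_adj_adj_adj (w := inl (f j + 5)) (x := inl (f j)) ?_ ?_ ?_ ?_ ?_ ?_ ?_;
     refine .of_adj_adj (w := inl (f j)) ?_ ?_ ?_ ?_]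
  all_goals try simp only [ne_eq, inl.injEq, reduceCtorEq, not_false_eq_true, adj_inl_inl,
    adj_inl_inr, adj_inr_inl, cycleGraph_adj, earColoring_mk, doubledPos]
  all_goals generalize f j = a; revert a; decide

theorem rainbowPath_inr_inr {j j' : Fin k} (h : f j' = f j + 1 ∨ f j' = f j + 2) :
    (sixCyclePlusEars k f).RainbowPath (earColoring f) (inr j) (inr j') := by
  have hjj : j ≠ j' := by
    rintro rfl
    generalize f j = a at h
    revert a; decide
  rcases h with h | h <;>
    [refine .of_adj_adj (w := inl (f j + 1)) ?_ ?_ ?_ ?_;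
     refine .of_adj_adj_adj (w := inl (f j + 1)) (x := inl (f j + 2)) ?_ ?_ ?_ ?_ ?_ ?_ ?_]
  all_goals try simp only [ne_eq, inr.injEq, hjj, reduceCtorEq, not_false_eq_true, adj_inl_inl,
    adj_inl_inr, adj_inr_inl, cycleGraph_adj, earColoring_mk, doubledPos, h]
  all_goals generalize f j = a; revert a; decide

theorem isRainbowConnected_earColoring (hf : Function.Injective f)
    (hopp : ∀ j j', f j' ≠ f j + 3) :
    IsRainbowConnected (sixCyclePlusEars k f) (earColoring f) := by
  rintro (u | j) (v | j') huv
  · exact rainbowPath_inl_inl (by simpa using huv)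
  · exact rainbowPath_inl_inr u j'
  · exact (rainbowPath_inl_inr v j).symm
  · have hne : f j ≠ f j' := hf.ne (by simpa using huv)
    have hnear : (f j' = f j + 1 ∨ f j' = f j + 2) ∨ (f j = f j' + 1 ∨ f j = f j' + 2) := by
      have := hopp j j'
      generalize f j = a at *; generalize f j' = b at *
      revert a b; decide
    rcases hnear with h | h
    · exact rainbowPath_inr_inr h
    · exact (rainbowPath_inr_inr h).symm

end SixCyclePlusEars

theorem rc_sixCycle_plus_ears_general (k : ℕ) (f : Fin k → Fin 6)
    (hf : Function.Injective f) (hdiam : (sixCyclePlusEars k f).diam = 3) :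
    rc (sixCyclePlusEars k f) = 3 := by
  have hc := SixCyclePlusEars.isRainbowConnected_earColoring hf
    (SixCyclePlusEars.ne_add_three_of_diam_eq_three hdiam)
  exact le_antisymm hc.rc_le (hdiam ▸ hc.diam_le_rc)

/-- If `G` is obtained from a 6-cycle by adding `k` new vertices (`1 ≤ k ≤ 3`), each new
vertex adjacent to exactly the two endpoints of one edge of the cycle, the chosen edges
being pairwise distinct (i.e. `f` injective), and `G` has diameter `3`, then the rainbow
connection number of `G` equals `3`. -/
theorem rc_sixCycle_plus_ears (k : ℕ) (h1 : 1 ≤ k) (h3 : k ≤ 3) (f : Fin k → Fin 6)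
    (hf : Function.Injective f) (hdiam : (sixCyclePlusEars k f).diam = 3) :
    rc (sixCyclePlusEars k f) = 3 :=
  rc_sixCycle_plus_ears_general k f hf hdiam
end
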